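/- arXiv:1411.6308 — 2 statements merged into one kernel-verified Lean document; each statement's English description precedes it below -/
import Mathlib

section
/- Let f : (Fin n → ℝ^c) → ℝ be any function, γ ≥ 0 a real number, W : Fin n → Fin n → ℝ a nonnegative weight matrix, and g, g' : Fin n → ℝ^c families of points with g i ≠ g j whenever W i j ≠ 0. If the 'reweighted' inequality f(g') + γ · ∑_{i,j} W i j · ‖g' i − g' j‖₂² / (2‖g i − g j‖₂) ≤ f(g) + γ · ∑_{i,j} W i j · ‖g i − g j‖₂² / (2‖g i − g j‖₂) holds (with terms where W i j = 0 taken as zero), then the original objective decreases: f(g') + γ · ∑_{i,j} W i j · ‖g' i − g' j‖₂ ≤ f(g) + γ · ∑_{i,j} W i j · ‖g i − g j‖₂. -/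
/-!
By AM–GM, `x ≤ x ^ 2 / (2 * a) + a / 2` for `a > 0`, with equality at `x = a`. Applied termwise
with `a = ‖gᵢ - gⱼ‖`, the reweighted penalty majorizes the true penalty up to a term that does not
depend on the iterate, and the two agree at `g`; so decreasing the reweighted objective decreases
the true one.
-/

open Finset

theorem sub_sq_div_two_mul_le (x : ℝ) {a : ℝ} (ha : 0 < a) :
    x - x ^ 2 / (2 * a) ≤ a - a ^ 2 / (2 * a) := by
  have hgap : a - a ^ 2 / (2 * a) - (x - x ^ 2 / (2 * a)) = (x - a) ^ 2 / (2 * a) := by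
    field_simp
    ring
  have : 0 ≤ (x - a) ^ 2 / (2 * a) := by positivity
  linarith

theorem mul_sub_sq_div_two_mul_le {w : ℝ} (x a : ℝ) (hw : 0 ≤ w) (ha : w ≠ 0 → 0 < a) :
    w * x - w * x ^ 2 / (2 * a) ≤ w * a - w * a ^ 2 / (2 * a) := by
  rcases eq_or_ne w 0 with rfl | hw0
  · simp
  · simp only [mul_div_assoc, ← mul_sub]
    exact mul_le_mul_of_nonneg_left (sub_sq_div_two_mul_le x (ha hw0)) hw

theorem sum_mul_sub_sq_div_two_mul_le {ι : Type*} [Fintype ι] (w x a : ι → ℝ)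
    (hw : ∀ i, 0 ≤ w i) (ha : ∀ i, w i ≠ 0 → 0 < a i) :
    ∑ i, w i * x i - ∑ i, w i * x i ^ 2 / (2 * a i) ≤
      ∑ i, w i * a i - ∑ i, w i * a i ^ 2 / (2 * a i) := by
  simp only [← sum_sub_distrib]
  exact sum_le_sum fun i _ => mul_sub_sq_div_two_mul_le (x i) (a i) (hw i) (ha i)

/-- Key step of the convergence proof (Eqs. (15)–(17) of the paper): if the next iterate `g'`
does not increase the reweighted objective
`f(G) + γ ∑_{i,j} W i j ‖Gᵢ − Gⱼ‖²/(2‖gᵢ − gⱼ‖)`, then it does not increase the true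
objective `f(G) + γ ∑_{i,j} W i j ‖Gᵢ − Gⱼ‖`. -/
theorem spectral_shrunk_objective_decreases (n c : ℕ)
    (f : (Fin n → EuclideanSpace ℝ (Fin c)) → ℝ) (γ : ℝ) (hγ : 0 ≤ γ)
    (W : Fin n → Fin n → ℝ) (hW : ∀ i j, 0 ≤ W i j)
    (g g' : Fin n → EuclideanSpace ℝ (Fin c))
    (hgz : ∀ i j, W i j ≠ 0 → g i ≠ g j)
    (h : f g' + γ * ∑ i, ∑ j, W i j * ‖g' i - g' j‖ ^ 2 / (2 * ‖g i - g j‖) ≤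
         f g + γ * ∑ i, ∑ j, W i j * ‖g i - g j‖ ^ 2 / (2 * ‖g i - g j‖)) :
    f g' + γ * ∑ i, ∑ j, W i j * ‖g' i - g' j‖ ≤
      f g + γ * ∑ i, ∑ j, W i j * ‖g i - g j‖ := by
  have key := sum_mul_sub_sq_div_two_mul_le (ι := Fin n × Fin n) (fun p => W p.1 p.2)
    (fun p => ‖g' p.1 - g' p.2‖) (fun p => ‖g p.1 - g p.2‖) (fun p => hW p.1 p.2)
    (fun p hp => norm_sub_pos_iff.mpr (hgz p.1 p.2 hp))
  simp only [Fintype.sum_prod_type] at key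
  have hscaled := mul_le_mul_of_nonneg_left key hγ
  rw [mul_sub, mul_sub] at hscaled
  linarith
end

section
/- Let S and L̃ be real symmetric n × n matrices with S positive definite, L̃ positive semidefinite, and let γ ≥ 0. Then for any F : Matrix (Fin n) (Fin c) ℝ, the matrix G* = (S + γ L̃)⁻¹ S F is the unique minimizer over all G : Matrix (Fin n) (Fin c) ℝ of the function Q(G) = Tr((G − F)ᵀ S (G − F)) + γ · Tr(Gᵀ L̃ G); in particular S + γ L̃ is invertible and Q(G*) ≤ Q(G) for all G, with equality only when G = G*. -/
/-!
Completing the square. With `A = S + γ L̃` positive definite and `G* = A⁻¹ S F`, the normal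
equation `A G* = S F` kills the cross term, so that
`Q(G) = Q(G*) + Tr((G − G*)ᵀ A (G − G*))` for every `G`. The last trace is nonnegative and,
`A` being positive definite, vanishes only when `G = G*`.
-/

open Matrix

/-- The smoothed Spectral Shrunk Clustering objective (Eq. (12) of the paper):
`Q(G) = Tr((G − F)ᵀ S (G − F)) + γ Tr(Gᵀ L̃ G)`. -/
noncomputable def sscQ {n c : ℕ} (S L : Matrix (Fin n) (Fin n) ℝ) (γ : ℝ)
    (F G : Matrix (Fin n) (Fin c) ℝ) : ℝ :=
  ((G - F)ᵀ * S * (G - F)).trace + γ * (Gᵀ * L * G).trace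

open scoped ComplexOrder

namespace Matrix

variable {m n R : Type*} [Fintype m] [Fintype n]

theorem IsSymm.trace_transpose_mul_mul_comm [CommSemiring R] {S : Matrix n n R} (hS : S.IsSymm)
    (X Y : Matrix n m R) : (Xᵀ * S * Y).trace = (Yᵀ * S * X).trace := by
  rw [← trace_transpose, transpose_mul, transpose_mul, transpose_transpose, hS.eq,
    Matrix.mul_assoc]

theorem PosDef.eq_zero_of_conjTranspose_mul_mul_eq_zero [Ring R] [PartialOrder R] [StarRing R]
    {A : Matrix n n R} (hA : A.PosDef) {B : Matrix n m R} (h : Bᴴ * A * B = 0) : B = 0 := by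
  refine ext_iff_mulVec.mpr fun x => ?_
  by_contra hx
  have hpos : 0 < star x ⬝ᵥ ((Bᴴ * A * B) *ᵥ x) := by
    simpa only [star_mulVec, dotProduct_mulVec, vecMul_vecMul] using
      hA.dotProduct_mulVec_pos (x := B *ᵥ x) (by simpa using hx)
  simp [h] at hpos

theorem PosDef.trace_conjTranspose_mul_mul_eq_zero_iff {𝕜 : Type*} [RCLike 𝕜]
    {A : Matrix n n 𝕜} (hA : A.PosDef) {B : Matrix n m 𝕜} :
    (Bᴴ * A * B).trace = 0 ↔ B = 0 := by
  refine ⟨fun h => hA.eq_zero_of_conjTranspose_mul_mul_eq_zero ?_, by rintro rfl; simp⟩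
  exact (hA.posSemidef.conjTranspose_mul_mul_same B).trace_eq_zero_iff.mp h

end Matrix

theorem sscQ_eq_sscQ_add_trace {n c : ℕ} {S L : Matrix (Fin n) (Fin n) ℝ} (hS : S.IsSymm)
    (hL : L.IsSymm) (γ : ℝ) {F G₀ : Matrix (Fin n) (Fin c) ℝ}
    (hG₀ : (S + γ • L) * G₀ = S * F) (G : Matrix (Fin n) (Fin c) ℝ) :
    sscQ S L γ F G = sscQ S L γ F G₀ + ((G - G₀)ᵀ * (S + γ • L) * (G - G₀)).trace := by
  obtain ⟨D, rfl⟩ : ∃ D, G = G₀ + D := ⟨G - G₀, by abel⟩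
  have hcross : (Dᵀ * S * (G₀ - F)).trace + γ * (Dᵀ * L * G₀).trace = 0 := by
    have : Dᵀ * S * (G₀ - F) + γ • (Dᵀ * L * G₀) = Dᵀ * ((S + γ • L) * G₀ - S * F) := by
      simp only [Matrix.mul_sub, Matrix.add_mul, Matrix.mul_add, Matrix.smul_mul, Matrix.mul_smul,
        Matrix.mul_assoc]
      abel
    rw [← smul_eq_mul, ← trace_smul, ← trace_add, this, hG₀, sub_self, Matrix.mul_zero, trace_zero]
  have hS_swap := hS.trace_transpose_mul_mul_comm (G₀ - F) D
  have hL_swap := hL.trace_transpose_mul_mul_comm G₀ D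
  rw [sscQ, sscQ, show G₀ + D - F = (G₀ - F) + D by abel, add_sub_cancel_left]
  simp only [transpose_add, Matrix.add_mul, Matrix.mul_add, Matrix.smul_mul, Matrix.mul_smul,
    trace_add, trace_smul, smul_eq_mul]
  linear_combination hS_swap + γ * hL_swap + 2 * hcross

theorem ssc_closed_form_minimizer_general (n c : ℕ) (S L : Matrix (Fin n) (Fin n) ℝ)
    (hS : S.PosDef) (hL : L.PosSemidef) (γ : ℝ) (hγ : 0 ≤ γ)
    (F : Matrix (Fin n) (Fin c) ℝ) :
    IsUnit (S + γ • L) ∧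
      ∀ G : Matrix (Fin n) (Fin c) ℝ,
        sscQ S L γ F ((S + γ • L)⁻¹ * S * F) ≤ sscQ S L γ F G ∧
        (sscQ S L γ F G = sscQ S L γ F ((S + γ • L)⁻¹ * S * F) →
          G = (S + γ • L)⁻¹ * S * F) := by
  have hA : (S + γ • L).PosDef := hS.add_posSemidef (hL.smul hγ)
  have hG₀ : (S + γ • L) * ((S + γ • L)⁻¹ * S * F) = S * F := by
    rw [Matrix.mul_assoc, mul_nonsing_inv_cancel_left _ _ ((isUnit_iff_isUnit_det _).mp hA.isUnit)]
  set G₀ := (S + γ • L)⁻¹ * S * F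
  have hsq := sscQ_eq_sscQ_add_trace (isHermitian_iff_isSymm.mp hS.isHermitian)
    (isHermitian_iff_isSymm.mp hL.isHermitian) γ hG₀
  refine ⟨hA.isUnit, fun G => ⟨?_, fun h => ?_⟩⟩
  · rw [hsq G, ← conjTranspose_eq_transpose_of_trivial]
    exact le_add_of_nonneg_right (hA.posSemidef.conjTranspose_mul_mul_same (G - G₀)).trace_nonneg
  · rwa [hsq G, add_eq_left, ← conjTranspose_eq_transpose_of_trivial,
      hA.trace_conjTranspose_mul_mul_eq_zero_iff, sub_eq_zero] at h

/-- For `S` positive definite, `L̃` positive semidefinite and `γ ≥ 0`, the matrix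
`G* = (S + γ L̃)⁻¹ S F` (Eq. (13) of the paper) is the unique minimizer of
`Q(G) = Tr((G − F)ᵀ S (G − F)) + γ Tr(Gᵀ L̃ G)`: in particular `S + γ L̃` is invertible,
`Q(G*) ≤ Q(G)` for all `G`, with equality only when `G = G*`. -/
theorem ssc_closed_form_minimizer (n c : ℕ) (S L : Matrix (Fin n) (Fin n) ℝ)
    (hSsymm : S.IsSymm) (hLsymm : L.IsSymm)
    (hS : S.PosDef) (hL : L.PosSemidef) (γ : ℝ) (hγ : 0 ≤ γ)
    (F : Matrix (Fin n) (Fin c) ℝ) :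
    IsUnit (S + γ • L) ∧
      ∀ G : Matrix (Fin n) (Fin c) ℝ,
        sscQ S L γ F ((S + γ • L)⁻¹ * S * F) ≤ sscQ S L γ F G ∧
        (sscQ S L γ F G = sscQ S L γ F ((S + γ • L)⁻¹ * S * F) →
          G = (S + γ • L)⁻¹ * S * F) :=
  ssc_closed_form_minimizer_general n c S L hS hL γ hγ F
end
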